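/- The function t ↦ log Φ(t), where Φ is the standard normal CDF, is concave on ℝ; equivalently, for all t, Φ''(t)Φ(t) ≤ Φ'(t)², i.e., −t·φ(t)·Φ(t) ≤ φ(t)² where φ is the standard normal density. -/

import Mathlib

open MeasureTheory

/-- Standard normal density. -/
noncomputable def stdNormalPDF (x : ℝ) : ℝ := Real.exp (-(x ^ 2) / 2) / Real.sqrt (2 * Real.pi)

/-- Standard normal CDF. -/
noncomputable def stdNormalCDF (x : ℝ) : ℝ := ∫ t in Set.Iic x, stdNormalPDF t

/-!
The standard normal density satisfies `φ' = -t φ`, so `log Φ` has second derivative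
`(-t φ Φ - φ²) / Φ²`, and concavity reduces to the tail bound `-t Φ(t) ≤ φ(t)`. For `t ≥ 0` the
left side is nonpositive; for `t < 0` it follows by integrating `φ(s) ≤ (s / t) φ(s) = φ'(s) / (-t)`
over `s ≤ t`.
-/

open Real Set Filter Topology

theorem concaveOn_log_of_hasDerivAt_of_mul_le_sq {D : Set ℝ} (hD : Convex ℝ D) (hDo : IsOpen D)
    {F f g : ℝ → ℝ} (hF : ∀ x ∈ D, 0 < F x) (hFf : ∀ x ∈ D, HasDerivAt F (f x) x)
    (hfg : ∀ x ∈ D, HasDerivAt f (g x) x) (hle : ∀ x ∈ D, g x * F x ≤ f x ^ 2) :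
    ConcaveOn ℝ D (fun x => log (F x)) := by
  have hlog : ∀ x ∈ D, HasDerivAt (fun x => log (F x)) (f x / F x) x :=
    fun x hx => (hFf x hx).log (hF x hx).ne'
  refine concaveOn_of_hasDerivWithinAt2_nonpos (f' := fun x => f x / F x)
    (f'' := fun x => (g x * F x - f x * f x) / F x ^ 2) hD
    (fun x hx => (hlog x hx).continuousAt.continuousWithinAt) ?_ ?_ ?_ <;>
    rw [hDo.interior_eq] <;> intro x hx
  · exact (hlog x hx).hasDerivWithinAt
  · exact ((hfg x hx).div (hFf x hx) (hF x hx).ne').hasDerivWithinAt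
  · exact div_nonpos_of_nonpos_of_nonneg (by nlinarith [hle x hx]) (sq_nonneg _)

lemma stdNormalPDF_pos (x : ℝ) : 0 < stdNormalPDF x :=
  div_pos (exp_pos _) (sqrt_pos.2 (by positivity))

lemma continuous_stdNormalPDF : Continuous stdNormalPDF := by
  unfold stdNormalPDF; fun_prop

lemma integrable_stdNormalPDF : Integrable stdNormalPDF := by
  refine ((integrable_exp_neg_mul_sq (b := 1 / 2) (by norm_num)).div_const
    (sqrt (2 * π))).congr (Eventually.of_forall fun x => ?_)
  unfold stdNormalPDF
  ring_nf

lemma integrable_mul_stdNormalPDF : Integrable fun x => x * stdNormalPDF x := by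
  refine ((integrable_rpow_mul_exp_neg_mul_sq (b := 1 / 2) (by norm_num) (s := 1)
    (by norm_num)).div_const (sqrt (2 * π))).congr (Eventually.of_forall fun x => ?_)
  simp only [rpow_one, stdNormalPDF]
  ring_nf

lemma hasDerivAt_stdNormalPDF (x : ℝ) : HasDerivAt stdNormalPDF (-x * stdNormalPDF x) x := by
  have hexp : HasDerivAt (fun y : ℝ => -(y ^ 2) / 2) (-x) x := by
    simpa using ((hasDerivAt_pow 2 x).neg.div_const 2).congr_deriv (by ring)
  have hpdf : HasDerivAt stdNormalPDF (exp (-(x ^ 2) / 2) * -x / sqrt (2 * π)) x :=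
    hexp.exp.div_const _
  exact hpdf.congr_deriv (by unfold stdNormalPDF; ring)

lemma tendsto_stdNormalPDF_atBot : Tendsto stdNormalPDF atBot (𝓝 0) := by
  have hsq : Tendsto (fun x : ℝ => x ^ 2) atBot atTop := by
    simpa only [Function.comp_def, neg_sq] using
      (tendsto_pow_atTop (α := ℝ) two_ne_zero).comp tendsto_neg_atBot_atTop
  have hexp := (tendsto_exp_atBot.comp
    ((tendsto_neg_atTop_atBot.comp hsq).atBot_div_const two_pos)).div_const (sqrt (2 * π))
  rwa [zero_div] at hexp

lemma integral_Iic_neg_mul_stdNormalPDF (t : ℝ) :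
    ∫ s in Iic t, -s * stdNormalPDF s = stdNormalPDF t := by
  have hint : IntegrableOn (fun s => -s * stdNormalPDF s) (Iic t) :=
    (integrable_mul_stdNormalPDF.neg.congr
      (Eventually.of_forall fun x => by simp only [Pi.neg_apply]; ring)).integrableOn
  simpa using integral_Iic_of_hasDerivAt_of_tendsto' (fun x _ => hasDerivAt_stdNormalPDF x)
    hint tendsto_stdNormalPDF_atBot

lemma stdNormalCDF_pos (t : ℝ) : 0 < stdNormalCDF t := by
  rw [stdNormalCDF, setIntegral_pos_iff_support_of_nonneg_ae
    (Eventually.of_forall fun x => (stdNormalPDF_pos x).le) integrable_stdNormalPDF.integrableOn,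
    Function.support_eq_univ fun x => (stdNormalPDF_pos x).ne', univ_inter, volume_Iic]
  exact ENNReal.zero_lt_top

lemma hasDerivAt_stdNormalCDF (x : ℝ) : HasDerivAt stdNormalCDF (stdNormalPDF x) x := by
  have hsplit : stdNormalCDF = fun y => stdNormalCDF 0 + ∫ s in (0 : ℝ)..y, stdNormalPDF s := by
    funext y
    rw [stdNormalCDF, stdNormalCDF, ← intervalIntegral.integral_Iic_sub_Iic
      integrable_stdNormalPDF.integrableOn integrable_stdNormalPDF.integrableOn]
    ring
  rw [hsplit]
  exact (intervalIntegral.integral_hasDerivAt_right integrable_stdNormalPDF.intervalIntegrable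
    continuous_stdNormalPDF.stronglyMeasurable.stronglyMeasurableAtFilter
    continuous_stdNormalPDF.continuousAt).const_add _

lemma neg_mul_stdNormalCDF_le_stdNormalPDF (t : ℝ) : -t * stdNormalCDF t ≤ stdNormalPDF t := by
  rcases le_or_gt 0 t with ht | ht
  · nlinarith [stdNormalCDF_pos t, stdNormalPDF_pos t]
  calc -t * stdNormalCDF t = ∫ s in Iic t, -t * stdNormalPDF s := by
        rw [stdNormalCDF, integral_const_mul]
    _ ≤ ∫ s in Iic t, -s * stdNormalPDF s := by
        refine setIntegral_mono_on (integrable_stdNormalPDF.const_mul _).integrableOn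
          ?_ measurableSet_Iic fun s hs => ?_
        · exact (integrable_mul_stdNormalPDF.neg.congr (Eventually.of_forall fun s => by
            simp only [Pi.neg_apply, neg_mul])).integrableOn
        · exact mul_le_mul_of_nonneg_right (neg_le_neg hs) (stdNormalPDF_pos s).le
    _ = stdNormalPDF t := integral_Iic_neg_mul_stdNormalPDF t

lemma neg_mul_stdNormalPDF_mul_stdNormalCDF_le_sq (t : ℝ) :
    -t * stdNormalPDF t * stdNormalCDF t ≤ stdNormalPDF t ^ 2 := by
  nlinarith [mul_le_mul_of_nonneg_left (neg_mul_stdNormalCDF_le_stdNormalPDF t)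
    (stdNormalPDF_pos t).le]

/-- `t ↦ log Φ(t)` is concave on ℝ; equivalently `Φ''(t)Φ(t) ≤ Φ'(t)²`,
i.e. `−t φ(t) Φ(t) ≤ φ(t)²`. -/
theorem stmt4 :
    ConcaveOn ℝ Set.univ (fun t : ℝ => Real.log (stdNormalCDF t)) ∧
    ∀ t : ℝ, -t * stdNormalPDF t * stdNormalCDF t ≤ (stdNormalPDF t) ^ 2 :=
  ⟨concaveOn_log_of_hasDerivAt_of_mul_le_sq convex_univ isOpen_univ
    (fun x _ => stdNormalCDF_pos x) (fun x _ => hasDerivAt_stdNormalCDF x)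
    (fun x _ => hasDerivAt_stdNormalPDF x)
    (fun x _ => neg_mul_stdNormalPDF_mul_stdNormalCDF_le_sq x),
   neg_mul_stdNormalPDF_mul_stdNormalCDF_le_sq⟩
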